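/- (Proposition 2) Assume 0 < p_ε < 1, q_j > 0 for every j ∈ {1,…,J}, and Θmax ≤ Δmax. Then the AA decision process satisfies the weak accessibility condition: the state space S can be partitioned into two disjoint sets T and C such that (i) every state in T has zero n-step return probability to itself for every n ≥ 1 and every action sequence (hence is transient under every stationary policy), and (ii) any two states of C are accessible from each other, i.e., for every s, s' ∈ C there exist n ≥ 1 and an action sequence β_1,…,β_n with positive n-step transition probability from s to s'. (One may take C = G and T = S \ G.) -/

import Mathlib

/-! Take `C = G`. Since `Θmax ≤ Δmax`, an idle step from `Θ ≤ Δ` keeps `Θ ≤ Δ` and a query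
resets `Θ` to `1`, so `G` is closed; outside `G` every step either enters `G` or raises `Δ` by
one, so no state outside `G` is ever revisited. Conversely, a successful query (probability
`(1 - pε) q_j' > 0`) reaches `(j', 1, 1)` from anywhere, and from there erased queries
(probability `pε > 0`) and idle steps reach every state of `G`. -/

/-- Index set `{1, …, n}` as a subtype of `ℕ`. -/
abbrev Idx (n : ℕ) := {m : ℕ // m ∈ Finset.Icc 1 n}

/-- `min (d + 1) n`, i.e. the successor capped at the maximum value `n`. -/
def succCap (n : ℕ) (d : Idx n) : Idx n :=
  ⟨min (d.1 + 1) n, by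
    have := d.2
    simp only [Finset.mem_Icc] at *
    omega⟩

/-- State of the actuation-agent (AA) MDP: `(j, Δ, Θ)` with `j ∈ {1,…,J}` the index of
the usefulness of the last received update, `Δ ∈ {1,…,Δmax}` the age of information and
`Θ ∈ {1,…,Θmax}` the action lateness. -/
abbrev AAState (J D T : ℕ) := Idx J × Idx D × Idx T

/-- One-step transition probability of the AA MDP.  Under action `β = false` (no query),
`(j, Δ, Θ)` moves to `(j, min(Δ+1, Δmax), min(Θ+1, Θmax))` with probability `1`.
Under `β = true` (raise a query), it moves to `(j, min(Δ+1, Δmax), 1)` with probability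
`pe` (erasure) and to `(j', 1, 1)` with probability `(1 - pe) * q j'` for each `j'`.
All other one-step transitions have probability `0`. -/
def AAstep {J D T : ℕ} (pe : ℝ) (q : Idx J → ℝ)
    (s : AAState J D T) (β : Bool) (s' : AAState J D T) : ℝ :=
  if β then
    (if s'.1 = s.1 ∧ s'.2.1 = succCap D s.2.1 ∧ s'.2.2.1 = 1 then pe else 0) +
    (if s'.2.1.1 = 1 ∧ s'.2.2.1 = 1 then (1 - pe) * q s'.1 else 0)
  else
    if s'.1 = s.1 ∧ s'.2.1 = succCap D s.2.1 ∧ s'.2.2 = succCap T s.2.2 then 1 else 0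

/-- `n`-step transition probability of an MDP along a given list of actions:
the sum over all intermediate-state sequences of the products of the
one-step transition probabilities. -/
def nstep {S A : Type*} [Fintype S] [DecidableEq S] (P : S → A → S → ℝ) :
    List A → S → S → ℝ
  | [], s, s' => if s = s' then 1 else 0
  | a :: as, s, s' => ∑ t, P s a t * nstep P as t s'

/-- The set `G = {(j, Δ, Θ) ∈ S : Θ ≤ Δ}`. -/
def Gset (J D T : ℕ) : Set (AAState J D T) := {s | s.2.2.1 ≤ s.2.1.1}

def CanStep {S A : Type*} (P : S → A → S → ℝ) (s t : S) : Prop :=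
  ∃ a, P s a t ≠ 0

section nstep

variable {S A : Type*} [Fintype S] [DecidableEq S] {P : S → A → S → ℝ}

theorem nstep_singleton (a : A) (s t : S) : nstep P [a] s t = P s a t := by
  simp [nstep]

theorem nstep_nonneg (hP : ∀ s a t, 0 ≤ P s a t) :
    ∀ (as : List A) (s t : S), 0 ≤ nstep P as s t
  | [], s, t => by unfold nstep; split_ifs <;> norm_num
  | a :: as, s, t => Finset.sum_nonneg fun u _ => mul_nonneg (hP s a u) (nstep_nonneg hP as u t)

theorem exists_canStep_of_nstep_cons_ne_zero {a : A} {as : List A} {s t : S}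
    (h : nstep P (a :: as) s t ≠ 0) : ∃ u, P s a u ≠ 0 ∧ nstep P as u t ≠ 0 := by
  obtain ⟨u, -, hu⟩ := Finset.exists_ne_zero_of_sum_ne_zero h
  exact ⟨u, left_ne_zero_of_mul hu, right_ne_zero_of_mul hu⟩

theorem reflTransGen_of_nstep_ne_zero :
    ∀ {as : List A} {s t : S}, nstep P as s t ≠ 0 → Relation.ReflTransGen (CanStep P) s t
  | [], s, t, h => by
    unfold nstep at h
    split_ifs at h with hst
    · exact hst ▸ Relation.ReflTransGen.refl
    · exact absurd rfl h
  | _ :: _, _, _, h => by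
    obtain ⟨u, hsu, hut⟩ := exists_canStep_of_nstep_cons_ne_zero h
    exact Relation.ReflTransGen.head ⟨_, hsu⟩ (reflTransGen_of_nstep_ne_zero hut)

theorem transGen_of_nstep_ne_zero {as : List A} {s t : S} (has : as ≠ [])
    (h : nstep P as s t ≠ 0) : Relation.TransGen (CanStep P) s t := by
  obtain ⟨a, as, rfl⟩ := List.exists_cons_of_ne_nil has
  obtain ⟨u, hsu, hut⟩ := exists_canStep_of_nstep_cons_ne_zero h
  exact Relation.TransGen.head' ⟨a, hsu⟩ (reflTransGen_of_nstep_ne_zero hut)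

theorem exists_nstep_pos_of_transGen (hP : ∀ s a t, 0 ≤ P s a t) {s t : S}
    (h : Relation.TransGen (CanStep P) s t) : ∃ as : List A, as ≠ [] ∧ 0 < nstep P as s t := by
  induction h using Relation.TransGen.head_induction_on with
  | single hst =>
    obtain ⟨a, ha⟩ := hst
    exact ⟨[a], List.cons_ne_nil _ _, by
      rw [nstep_singleton]; exact lt_of_le_of_ne (hP _ _ _) (Ne.symm ha)⟩
  | @head s u hsu _ ih =>
    obtain ⟨a, ha⟩ := hsu
    obtain ⟨as, -, has⟩ := ih
    refine ⟨a :: as, List.cons_ne_nil _ _, Finset.sum_pos'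
      (fun v _ => mul_nonneg (hP s a v) (nstep_nonneg hP as v t)) ⟨u, Finset.mem_univ u, ?_⟩⟩
    exact mul_pos (lt_of_le_of_ne (hP _ _ _) (Ne.symm ha)) has

end nstep

section AA

variable {J D T : ℕ} {pe : ℝ} {q : Idx J → ℝ}

theorem mem_Gset {s : AAState J D T} : s ∈ Gset J D T ↔ s.2.2.1 ≤ s.2.1.1 := Iff.rfl

theorem AAstep_nonneg (hpe : 0 ≤ pe ∧ pe ≤ 1) (hq : ∀ j, 0 ≤ q j)
    (s : AAState J D T) (β : Bool) (t : AAState J D T) : 0 ≤ AAstep pe q s β t := by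
  have := hq t.1
  unfold AAstep
  cases β <;> simp only [Bool.false_eq_true, if_false, if_true] <;> split_ifs <;> nlinarith

theorem lateness_eq_one_or_of_canStep {s t : AAState J D T} (h : CanStep (AAstep pe q) s t) :
    t.2.2.1 = 1 ∨ t.2.1.1 = min (s.2.1.1 + 1) D ∧ t.2.2.1 = min (s.2.2.1 + 1) T := by
  obtain ⟨β, h⟩ := h
  unfold AAstep at h
  cases β with
  | false =>
    simp only [Bool.false_eq_true, if_false, ne_eq, ite_eq_right_iff, one_ne_zero] at h
    exact Or.inr ⟨congrArg Subtype.val (not_not.1 h).2.1, congrArg Subtype.val (not_not.1 h).2.2⟩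
  | true =>
    by_contra hne
    simp_all

theorem mem_Gset_of_canStep (hTD : T ≤ D) {s t : AAState J D T} (hs : s ∈ Gset J D T)
    (h : CanStep (AAstep pe q) s t) : t ∈ Gset J D T := by
  have := lateness_eq_one_or_of_canStep h
  have := t.2.1.2; have := t.2.2.2
  simp only [mem_Gset, Finset.mem_Icc] at *
  omega

/-- Outside `G` the age is below the lateness, hence below `Θmax ≤ Δmax`, so a step that does
not reset the lateness increments the age without capping. -/
theorem mem_Gset_or_age_succ_of_canStep (hTD : T ≤ D) {s t : AAState J D T}
    (hs : s ∉ Gset J D T) (h : CanStep (AAstep pe q) s t) :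
    t ∈ Gset J D T ∨ t.2.1.1 = s.2.1.1 + 1 := by
  have := lateness_eq_one_or_of_canStep h
  have := t.2.1.2; have := s.2.2.2
  simp only [mem_Gset, Finset.mem_Icc] at *
  omega

theorem mem_Gset_or_age_lt_of_transGen (hTD : T ≤ D) {s t : AAState J D T}
    (hs : s ∉ Gset J D T) (h : Relation.TransGen (CanStep (AAstep pe q)) s t) :
    t ∈ Gset J D T ∨ s.2.1.1 < t.2.1.1 := by
  induction h with
  | single hst =>
    rcases mem_Gset_or_age_succ_of_canStep hTD hs hst with h | h
    exacts [Or.inl h, Or.inr (by omega)]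
  | @tail u t _ hut ih =>
    rcases ih with hu | hu
    · exact Or.inl (mem_Gset_of_canStep hTD hu hut)
    · by_cases huG : u ∈ Gset J D T
      · exact Or.inl (mem_Gset_of_canStep hTD huG hut)
      rcases mem_Gset_or_age_succ_of_canStep hTD huG hut with h | h
      exacts [Or.inl h, Or.inr (by omega)]

theorem not_transGen_self_of_not_mem_Gset (hTD : T ≤ D) {s : AAState J D T}
    (hs : s ∉ Gset J D T) : ¬ Relation.TransGen (CanStep (AAstep pe q)) s s := fun h =>
  (mem_Gset_or_age_lt_of_transGen hTD hs h).elim hs (lt_irrefl _)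

theorem canStep_query_success (hpe : 0 ≤ pe ∧ pe < 1) (hq : ∀ j, 0 < q j)
    (s t : AAState J D T) (ht : t.2.1.1 = 1 ∧ t.2.2.1 = 1) : CanStep (AAstep pe q) s t := by
  refine ⟨true, ne_of_gt ?_⟩
  have := hq t.1
  simp only [AAstep, if_true, ht, and_self, and_true]
  split_ifs <;> nlinarith

theorem canStep_query_erasure (hpe : 0 < pe ∧ pe ≤ 1) (hq : ∀ j, 0 ≤ q j)
    (s t : AAState J D T) (ht : t.1 = s.1 ∧ t.2.1 = succCap D s.2.1 ∧ t.2.2.1 = 1) :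
    CanStep (AAstep pe q) s t := by
  refine ⟨true, ne_of_gt ?_⟩
  have := hq s.1
  simp only [AAstep, if_true, ht, and_self, and_true]
  split_ifs <;> nlinarith

theorem canStep_idle (s : AAState J D T) :
    CanStep (AAstep pe q) s (s.1, succCap D s.2.1, succCap T s.2.2) :=
  ⟨false, by simp [AAstep]⟩

theorem AAState.ext_val {s t : AAState J D T} (h1 : s.1 = t.1) (h2 : s.2.1.1 = t.2.1.1)
    (h3 : s.2.2.1 = t.2.2.1) : s = t :=
  Prod.ext h1 (Prod.ext (Subtype.ext h2) (Subtype.ext h3))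

theorem reflTransGen_of_query_erasures (hpe : 0 < pe ∧ pe ≤ 1) (hq : ∀ j, 0 ≤ q j) (k : ℕ) :
    ∀ s t : AAState J D T, t.1 = s.1 → s.2.2.1 = 1 → t.2.2.1 = 1 → t.2.1.1 = s.2.1.1 + k →
      Relation.ReflTransGen (CanStep (AAstep pe q)) s t := by
  induction k with
  | zero =>
    intro s t h1 h2 h3 h4
    exact AAState.ext_val h1.symm h4.symm (h2.trans h3.symm) ▸ Relation.ReflTransGen.refl
  | succ k ih =>
    intro s t h1 h2 h3 h4
    have := t.2.1.2
    simp only [Finset.mem_Icc] at this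
    refine Relation.ReflTransGen.head
      (canStep_query_erasure hpe hq s (s.1, succCap D s.2.1, s.2.2) ⟨rfl, rfl, h2⟩) ?_
    exact ih _ t h1 h2 h3 (by simp only [succCap]; omega)

theorem reflTransGen_of_idles (k : ℕ) :
    ∀ s t : AAState J D T, t.1 = s.1 → t.2.1.1 = s.2.1.1 + k → t.2.2.1 = s.2.2.1 + k →
      Relation.ReflTransGen (CanStep (AAstep pe q)) s t := by
  induction k with
  | zero =>
    intro s t h1 h2 h3
    exact AAState.ext_val h1.symm h2.symm h3.symm ▸ Relation.ReflTransGen.refl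
  | succ k ih =>
    intro s t h1 h2 h3
    have := t.2.1.2; have := t.2.2.2
    simp only [Finset.mem_Icc] at *
    refine Relation.ReflTransGen.head (canStep_idle s) ?_
    exact ih _ t h1 (by simp only [succCap]; omega) (by simp only [succCap]; omega)

theorem transGen_of_mem_Gset (hpe : 0 < pe ∧ pe < 1) (hq : ∀ j, 0 < q j)
    (s t : AAState J D T) (ht : t ∈ Gset J D T) :
    Relation.TransGen (CanStep (AAstep pe q)) s t := by
  have hΔ := t.2.1.2; have hΘ := t.2.2.2
  rw [mem_Gset] at ht
  simp only [Finset.mem_Icc] at hΔ hΘ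
  let m : AAState J D T := (t.1, ⟨1, by simp; omega⟩, ⟨1, by simp; omega⟩)
  let w : AAState J D T := (t.1, ⟨t.2.1.1 - t.2.2.1 + 1, by simp; omega⟩, ⟨1, by simp; omega⟩)
  have hq0 : ∀ j, 0 ≤ q j := fun j => (hq j).le
  refine Relation.TransGen.head' (canStep_query_success ⟨hpe.1.le, hpe.2⟩ hq s m ⟨rfl, rfl⟩) ?_
  refine (reflTransGen_of_query_erasures ⟨hpe.1, hpe.2.le⟩ hq0 (t.2.1.1 - t.2.2.1) m w
    rfl rfl rfl (by simp only [m, w]; omega)).trans ?_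
  exact reflTransGen_of_idles (t.2.2.1 - 1) w t rfl (by simp only [w]; omega)
    (by simp only [w]; omega)

end AA

theorem aa_weak_accessibility_general {J D T : ℕ}
    (hTD : T ≤ D) (pe : ℝ) (hpe : 0 < pe ∧ pe < 1)
    (q : Idx J → ℝ) (hqpos : ∀ j, 0 < q j) :
    ∃ Tset Cset : Set (AAState J D T),
      Disjoint Tset Cset ∧ Tset ∪ Cset = Set.univ ∧
      (∀ s ∈ Tset, ∀ (n : ℕ), 1 ≤ n → ∀ as : List Bool, as.length = n →
        nstep (AAstep pe q) as s s = 0) ∧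
      (∀ s ∈ Cset, ∀ s' ∈ Cset,
        ∃ (n : ℕ) (as : List Bool), 1 ≤ n ∧ as.length = n ∧
          0 < nstep (AAstep pe q) as s s') := by
  refine ⟨(Gset J D T)ᶜ, Gset J D T, disjoint_compl_left, Set.compl_union_self _, ?_, ?_⟩
  · rintro s hs n hn as rfl
    by_contra h
    exact not_transGen_self_of_not_mem_Gset hTD hs
      (transGen_of_nstep_ne_zero (List.ne_nil_of_length_pos hn) h)
  · intro s _ s' hs'
    obtain ⟨as, hne, hpos⟩ := exists_nstep_pos_of_transGen
      (AAstep_nonneg ⟨hpe.1.le, hpe.2.le⟩ fun j => (hqpos j).le)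
      (transGen_of_mem_Gset hpe hqpos s s' hs')
    exact ⟨as.length, as, List.length_pos_iff.2 hne, rfl, hpos⟩

/-- Proposition 2: under `0 < pe < 1`, `q j > 0` for all `j`, and `Θmax ≤ Δmax`, the AA
MDP satisfies the weak accessibility condition: the state space partitions into a set
`Tset` of states that are never revisited (hence transient under every stationary
policy) and a set `Cset` any two states of which are accessible from each other.
(One may take `Cset = G` and `Tset = S \ G`.) -/
theorem aa_weak_accessibility {J D T : ℕ} (hJ : 1 ≤ J) (hD : 1 ≤ D) (hT : 1 ≤ T)
    (hTD : T ≤ D) (pe : ℝ) (hpe : 0 < pe ∧ pe < 1)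
    (q : Idx J → ℝ) (hqpos : ∀ j, 0 < q j) (hqsum : ∑ j, q j = 1) :
    ∃ Tset Cset : Set (AAState J D T),
      Disjoint Tset Cset ∧ Tset ∪ Cset = Set.univ ∧
      (∀ s ∈ Tset, ∀ (n : ℕ), 1 ≤ n → ∀ as : List Bool, as.length = n →
        nstep (AAstep pe q) as s s = 0) ∧
      (∀ s ∈ Cset, ∀ s' ∈ Cset,
        ∃ (n : ℕ) (as : List Bool), 1 ≤ n ∧ as.length = n ∧
          0 < nstep (AAstep pe q) as s s') :=
  aa_weak_accessibility_general hTD pe hpe q hqpos
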